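/- arXiv:2408.14389 — 5 statements merged into one kernel-verified Lean document; each statement's English description precedes it below -/
import Mathlib

section
/- Let X be a real random variable with mean 0, variance 1, and E|X|^{2+β} ≤ C for some β > 0. Then there exists b ∈ (0,1), depending only on β and C, such that for all z ∈ ℝ, P(|X - z| ≤ 1/4) ≤ b. -/
open MeasureTheory

set_option maxHeartbeats 1000000

/-- Uniform anti-concentration from moment assumptions (normalized case):
if `X` has mean 0, variance 1 and `E|X|^(2+β) ≤ C`, then there is `b ∈ (0,1)`,
depending only on `β` and `C`, with `P(|X - z| ≤ 1/4) ≤ b` for all `z`. -/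
theorem stmt_0 (β C : ℝ) (hβ : 0 < β) (hC : 1 ≤ C) :
    ∃ b ∈ Set.Ioo (0 : ℝ) 1,
      ∀ {Ω : Type} [MeasurableSpace Ω] (μ : Measure Ω) [IsProbabilityMeasure μ]
        (X : Ω → ℝ), Measurable X →
        Integrable X μ → Integrable (fun ω => (X ω) ^ 2) μ →
        Integrable (fun ω => |X ω| ^ (2 + β)) μ →
        (∫ ω, X ω ∂μ) = 0 → (∫ ω, (X ω) ^ 2 ∂μ) = 1 →
        (∫ ω, |X ω| ^ (2 + β) ∂μ) ≤ C →
        ∀ z : ℝ, (μ {ω | |X ω - z| ≤ 1 / 4}).toReal ≤ b := by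
  have h2β : (0:ℝ) < 2 + β := by linarith
  set c : ℝ := (2:ℝ) ^ (2 + β) with hc
  have hc4 : (4:ℝ) ≤ c := by
    have h1 : (2:ℝ) ^ (2:ℝ) ≤ (2:ℝ) ^ (2 + β) :=
      Real.rpow_le_rpow_of_exponent_le one_le_two (by linarith)
    have h2 : (2:ℝ) ^ (2:ℝ) = 4 := by
      rw [show (2:ℝ) = ((2:ℕ):ℝ) by norm_num, Real.rpow_natCast]; norm_num
    linarith
  have hcpos : (0:ℝ) < c := by linarith
  set K : ℝ := c * (C + c) with hKdef
  have hKpos : 0 < K := by nlinarith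
  set M : ℝ := max 1 ((4*K) ^ (1/β)) with hM
  have hM1 : (1:ℝ) ≤ M := le_max_left _ _
  have hMpos : (0:ℝ) < M := lt_of_lt_of_le one_pos hM1
  have hMβpos : 0 < M ^ β := Real.rpow_pos_of_pos hMpos β
  have hMβ : 4*K ≤ M ^ β := by
    have h1 : ((4*K) ^ (1/β)) ^ β = 4*K := by
      rw [← Real.rpow_mul (by positivity), one_div_mul_cancel hβ.ne', Real.rpow_one]
    calc 4*K = ((4*K) ^ (1/β)) ^ β := h1.symm
      _ ≤ M ^ β := Real.rpow_le_rpow (Real.rpow_nonneg (by positivity) _)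
            (le_max_right _ _) hβ.le
  have hMsq : (0:ℝ) < M^2 := by positivity
  have hb2 : 1/(2*M^2) ≤ 1/2 := by
    rw [div_le_div_iff₀ (by positivity) (by norm_num)]; nlinarith
  have hb0 : 0 < 1/(2*M^2) := by positivity
  refine ⟨1 - 1/(2*M^2), ⟨by linarith, by linarith⟩, ?_⟩
  intro Ω _ μ _ X hX hX1 hX2 hXβ hmean hvar hmom z
  have hA : MeasurableSet {ω | |X ω - z| ≤ 1 / 4} :=
    measurableSet_le (by fun_prop) measurable_const
  have hpA : (μ {ω | |X ω - z| ≤ 1 / 4}).toReal ≤ 1 := by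
    have h := prob_le_one (μ := μ) (s := {ω | |X ω - z| ≤ 1 / 4})
    calc (μ {ω | |X ω - z| ≤ 1 / 4}).toReal ≤ (1:ENNReal).toReal :=
          ENNReal.toReal_mono ENNReal.one_ne_top h
      _ = 1 := by simp
  rcases le_or_gt |z| 2 with hz | hz
  · -- |z| ≤ 2 : main case
    have hsq_eq : ∀ ω, (X ω - z)^2 = X ω^2 - (2*z)*X ω + z^2 := fun ω => by ring
    have hint2 : Integrable (fun ω => (X ω - z)^2) μ := by
      have h : (fun ω => (X ω - z)^2) = fun ω => X ω^2 - (2*z)*X ω + z^2 := funext hsq_eq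
      rw [h]; exact (hX2.sub (hX1.const_mul _)).add (integrable_const _)
    have hIeq : ∫ ω, (X ω - z)^2 ∂μ = 1 + z^2 := by
      have hsubint : Integrable (fun ω => X ω ^ 2 - 2 * z * X ω) μ :=
        hX2.sub (hX1.const_mul (2*z))
      simp_rw [hsq_eq]
      rw [integral_add hsubint (integrable_const _),
        integral_sub hX2 (hX1.const_mul (2*z)), integral_const_mul, hmean, hvar, integral_const]
      simp
    -- bound for |X - z|^(2+β)
    have hbnd : ∀ ω, |X ω - z| ^ (2+β) ≤ c * |X ω| ^ (2+β) + c*c := by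
      intro ω
      have ha : (0:ℝ) ≤ |X ω| := abs_nonneg _
      have h1 : |X ω - z| ≤ 2 * max (|X ω|) 2 := by
        have ht : |X ω - z| ≤ |X ω| + |z| := by
          rw [sub_eq_add_neg]
          exact (abs_add_le _ _).trans_eq (by rw [abs_neg])
        have h2 : |X ω| ≤ max (|X ω|) 2 := le_max_left _ _
        have h3 : |z| ≤ max (|X ω|) 2 := le_trans hz (le_max_right _ _)
        linarith
      have h2 : |X ω - z| ^ (2+β) ≤ (2 * max (|X ω|) 2) ^ (2+β) :=
        Real.rpow_le_rpow (abs_nonneg _) h1 h2β.le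
      have h3 : (2 * max (|X ω|) 2) ^ (2+β) = c * (max (|X ω|) 2) ^ (2+β) := by
        rw [Real.mul_rpow (by norm_num) (by positivity)]
      have h4 : (max (|X ω|) 2) ^ (2+β) ≤ |X ω| ^ (2+β) + c := by
        rcases max_cases (|X ω|) 2 with ⟨h, _⟩ | ⟨h, _⟩
        · rw [h]; linarith
        · rw [h, ← hc]
          have : (0:ℝ) ≤ |X ω| ^ (2+β) := Real.rpow_nonneg ha _
          linarith
      calc |X ω - z| ^ (2+β) ≤ c * ((|X ω|) ^ (2+β) + c) := by
            rw [h3] at h2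
            exact h2.trans (mul_le_mul_of_nonneg_left h4 hcpos.le)
        _ = c * |X ω| ^ (2+β) + c*c := by ring
    have hintβz : Integrable (fun ω => |X ω - z| ^ (2+β)) μ := by
      refine Integrable.mono' ((hXβ.const_mul c).add (integrable_const (c*c))) ?_ ?_
      · exact ((by fun_prop : Measurable fun ω => |X ω - z| ^ (2+β))).aestronglyMeasurable
      · filter_upwards with ω
        rw [Real.norm_eq_abs, abs_of_nonneg (Real.rpow_nonneg (abs_nonneg _) _)]
        exact hbnd ω
    have hmomz : ∫ ω, |X ω - z| ^ (2+β) ∂μ ≤ K := by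
      calc ∫ ω, |X ω - z| ^ (2+β) ∂μ ≤ ∫ ω, (c * |X ω| ^ (2+β) + c*c) ∂μ :=
            integral_mono hintβz ((hXβ.const_mul c).add (integrable_const _)) hbnd
        _ = c * (∫ ω, |X ω| ^ (2+β) ∂μ) + c*c := by
            rw [integral_add (hXβ.const_mul c) (integrable_const _), integral_const_mul,
              integral_const]
            simp
        _ ≤ c * C + c*c := by nlinarith
        _ = K := by rw [hKdef]; ring
    have hmain : ∀ ω, (X ω - z)^2 ≤ 1/16 +
        Set.indicator {ω | |X ω - z| ≤ 1 / 4}ᶜ (fun _ => M^2) ω + |X ω - z| ^ (2+β) / M ^ β := by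
      intro ω
      have hrnn : 0 ≤ |X ω - z| ^ (2+β) / M ^ β := by positivity
      by_cases hω : |X ω - z| ≤ 1/4
      · have hind : Set.indicator {ω | |X ω - z| ≤ 1 / 4}ᶜ (fun _ => M^2) ω = 0 :=
          Set.indicator_of_notMem (by simp only [Set.mem_compl_iff, Set.mem_setOf_eq, not_not]; exact hω) _
        have h1 : (X ω - z)^2 ≤ 1/16 := by
          nlinarith [sq_abs (X ω - z), abs_nonneg (X ω - z)]
        rw [hind]; linarith
      · have hind : Set.indicator {ω | |X ω - z| ≤ 1 / 4}ᶜ (fun _ => M^2) ω = M^2 :=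
          Set.indicator_of_mem (by simp only [Set.mem_compl_iff, Set.mem_setOf_eq]; exact hω) _
        rw [hind]
        rcases le_or_gt (|X ω - z|) M with h | h
        · have h1 : (X ω - z)^2 ≤ M^2 := by
            nlinarith [sq_abs (X ω - z), abs_nonneg (X ω - z)]
          linarith
        · have hpos : 0 < |X ω - z| := lt_trans hMpos h
          have hsplit : |X ω - z| ^ (2+β) = (X ω - z)^2 * |X ω - z| ^ β := by
            rw [Real.rpow_add hpos]
            congr 1
            rw [show ((2:ℝ)) = ((2:ℕ):ℝ) by norm_num, Real.rpow_natCast, sq_abs]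
          have hb : M ^ β ≤ |X ω - z| ^ β := Real.rpow_le_rpow hMpos.le h.le hβ.le
          have h1 : (X ω - z)^2 ≤ |X ω - z| ^ (2+β) / M ^ β := by
            rw [le_div_iff₀ hMβpos, hsplit]
            exact mul_le_mul_of_nonneg_left hb (sq_nonneg _)
          nlinarith [sq_nonneg M]
    have hint_ind : Integrable
        (Set.indicator {ω | |X ω - z| ≤ 1 / 4}ᶜ (fun _ => M^2) : Ω → ℝ) μ :=
      (integrable_const (M^2)).indicator hA.compl
    have hcompl : (μ {ω | |X ω - z| ≤ 1 / 4}ᶜ).toReal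
        = 1 - (μ {ω | |X ω - z| ≤ 1 / 4}).toReal := by
      rw [prob_compl_eq_one_sub hA,
        ENNReal.toReal_sub_of_le prob_le_one ENNReal.one_ne_top]
      simp
    have hchain : 1 + z^2 ≤ 1/16 + M^2 * (1 - (μ {ω | |X ω - z| ≤ 1 / 4}).toReal) + K / M^β := by
      rw [← hIeq]
      calc ∫ ω, (X ω - z)^2 ∂μ
          ≤ ∫ ω, (1/16 + Set.indicator {ω | |X ω - z| ≤ 1 / 4}ᶜ (fun _ => M^2) ω
              + |X ω - z| ^ (2+β) / M ^ β) ∂μ :=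
            integral_mono hint2
              (((integrable_const _).add hint_ind).add (hintβz.div_const _)) hmain
        _ = 1/16 + M^2 * (1 - (μ {ω | |X ω - z| ≤ 1 / 4}).toReal)
              + (∫ ω, |X ω - z| ^ (2+β) ∂μ) / M ^ β := by
            have hIa : Integrable (fun ω => 1/16 +
                Set.indicator {ω | |X ω - z| ≤ 1 / 4}ᶜ (fun _ => M^2) ω) μ :=
              (integrable_const _).add hint_ind
            rw [integral_add hIa (hintβz.div_const _),
              integral_add (integrable_const (1/16 : ℝ)) hint_ind, integral_const,
              integral_indicator_const _ hA.compl, integral_div, measureReal_def, measureReal_def, hcompl]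
            simp [smul_eq_mul]
            ring
        _ ≤ 1/16 + M^2 * (1 - (μ {ω | |X ω - z| ≤ 1 / 4}).toReal) + K / M^β := by
            have := (div_le_div_iff_of_pos_right hMβpos).mpr hmomz
            linarith
    have hK4 : K / M^β ≤ 1/4 := by
      rw [div_le_iff₀ hMβpos]; linarith
    have h11 : 11/16 ≤ M^2 * (1 - (μ {ω | |X ω - z| ≤ 1 / 4}).toReal) := by
      nlinarith [sq_nonneg z]
    have hfin : 1/(2*M^2) ≤ 1 - (μ {ω | |X ω - z| ≤ 1 / 4}).toReal := by
      rw [div_le_iff₀ (by positivity)]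
      nlinarith
    linarith
  · -- |z| > 2
    have hptw : ∀ ω, Set.indicator {ω | |X ω - z| ≤ 1 / 4} (fun _ => (49/16:ℝ)) ω ≤ X ω^2 := by
      intro ω
      by_cases hω : ω ∈ {ω | |X ω - z| ≤ 1 / 4}
      · rw [Set.indicator_of_mem hω]
        have h1 : |z| - |X ω| ≤ |X ω - z| := by
          have h := abs_sub_abs_le_abs_sub z (X ω)
          rw [abs_sub_comm] at h
          linarith
        have h2 : |X ω - z| ≤ 1/4 := hω
        nlinarith [sq_abs (X ω), abs_nonneg (X ω)]
      · rw [Set.indicator_of_notMem hω]; positivity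
    have hintind : Integrable
        (Set.indicator {ω | |X ω - z| ≤ 1 / 4} (fun _ => (49/16:ℝ)) : Ω → ℝ) μ :=
      (integrable_const _).indicator hA
    have hkey : 49/16 * (μ {ω | |X ω - z| ≤ 1 / 4}).toReal ≤ 1 := by
      calc 49/16 * (μ {ω | |X ω - z| ≤ 1 / 4}).toReal
          = ∫ ω, Set.indicator {ω | |X ω - z| ≤ 1 / 4} (fun _ => (49/16:ℝ)) ω ∂μ := by
            rw [integral_indicator_const _ hA, measureReal_def]; simp [smul_eq_mul]; ring
        _ ≤ ∫ ω, X ω^2 ∂μ := integral_mono hintind hX2 hptw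
        _ = 1 := hvar
    linarith
end

section
/- Let X be a real random variable with nonzero variance σ² = E|X - EX|² and finite (2+β) central moment D = E|X - EX|^{2+β}. Then there exists b ∈ (0,1), depending only on β, σ², and D, such that sup_{z ∈ ℝ} P(|X - z| ≤ σ/4) ≤ b. -/
open MeasureTheory

/-- Upper bound on a set integral by a constant bound on the set. -/
lemma aux_setIntegral_le_const {Ω : Type} [MeasurableSpace Ω] (μ : Measure Ω)
    [IsFiniteMeasure μ] {f : Ω → ℝ} {s : Set Ω} {C : ℝ} (hs : MeasurableSet s)
    (hf : IntegrableOn f s μ) (hfs : ∀ x ∈ s, f x ≤ C) :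
    ∫ x in s, f x ∂μ ≤ C * (μ s).toReal := by
  calc ∫ x in s, f x ∂μ ≤ ∫ _ in s, C ∂μ :=
        setIntegral_mono_on hf (integrableOn_const (measure_ne_top μ s)) hs hfs
    _ = C * (μ s).toReal := by rw [setIntegral_const, smul_eq_mul, mul_comm]; rfl

set_option maxHeartbeats 1000000 in
/-- Uniform anti-concentration from moment assumptions (general case):
if `X` has variance `σ² > 0` and finite `(2+β)` central moment `D`, then there is
`b ∈ (0,1)`, depending only on `β`, `σ²` and `D`, such that
`P(|X - z| ≤ σ/4) ≤ b` for every `z`. -/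
theorem stmt_1 (β σ2 D : ℝ) (hβ : 0 < β) (hσ2 : 0 < σ2) (hD : 0 < D) :
    ∃ b ∈ Set.Ioo (0 : ℝ) 1,
      ∀ {Ω : Type} [MeasurableSpace Ω] (μ : Measure Ω) [IsProbabilityMeasure μ]
        (X : Ω → ℝ), Measurable X →
        Integrable X μ → Integrable (fun ω => (X ω - ∫ ω', X ω' ∂μ) ^ 2) μ →
        Integrable (fun ω => |X ω - ∫ ω', X ω' ∂μ| ^ (2 + β)) μ →
        (∫ ω, (X ω - ∫ ω', X ω' ∂μ) ^ 2 ∂μ) = σ2 →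
        (∫ ω, |X ω - ∫ ω', X ω' ∂μ| ^ (2 + β) ∂μ) = D →
        ∀ z : ℝ, (μ {ω | |X ω - z| ≤ Real.sqrt σ2 / 4}).toReal ≤ b := by
  set σ : ℝ := Real.sqrt σ2 with hσdef
  have hσ : 0 < σ := Real.sqrt_pos.2 hσ2
  have hσsq : σ ^ 2 = σ2 := Real.sq_sqrt hσ2.le
  set M : ℝ := max σ ((169 * D / σ2) ^ (β⁻¹)) with hMdef
  have hMσ : σ ≤ M := le_max_left _ _
  have hM : 0 < M := lt_of_lt_of_le hσ hMσ
  have hMβ : 169 * D / σ2 ≤ M ^ β := by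
    calc 169 * D / σ2 = ((169 * D / σ2) ^ (β⁻¹)) ^ β :=
          (Real.rpow_inv_rpow (by positivity) hβ.ne').symm
      _ ≤ M ^ β := Real.rpow_le_rpow (by positivity) (le_max_right _ _) hβ.le
  have hMβpos : (0:ℝ) < M ^ β := Real.rpow_pos_of_pos hM β
  set ε : ℝ := min (7 / 8 * σ2 / (M + 9 * σ / 4) ^ 2) (3 / 4) with hεdef
  have hεpos : 0 < ε := lt_min (by positivity) (by norm_num)
  have hεle : ε ≤ 3 / 4 := min_le_right _ _
  have hεle2 : ε ≤ 7 / 8 * σ2 / (M + 9 * σ / 4) ^ 2 := min_le_left _ _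
  have hMσ4 : 0 < M + 9 * σ / 4 := by positivity
  clear_value ε
  clear hεdef
  refine ⟨1 - ε, ⟨by linarith, by linarith⟩, ?_⟩
  intro Ω _ μ _ X hXm hXint hX2int hXβint hvar hmom z
  set m : ℝ := ∫ ω', X ω' ∂μ with hmdef
  set Y : Ω → ℝ := fun ω => X ω - m with hYdef
  have hYm : Measurable Y := hXm.sub measurable_const
  have hYint : Integrable Y μ := hXint.sub (integrable_const m)
  have hYmean : ∫ ω, Y ω ∂μ = 0 := by
    show ∫ ω, (X ω - m) ∂μ = 0; rw [integral_sub hXint (integrable_const m)]; simp [hmdef]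
  set c : ℝ := z - m with hcdef
  have hXz : ∀ ω, X ω - z = Y ω - c := by
    intro ω; show X ω - z = (X ω - m) - (z - m); ring
  set A : Set Ω := {ω | |X ω - z| ≤ σ / 4} with hAdef
  have hAmeas : MeasurableSet A := by
    apply measurableSet_le (by fun_prop) measurable_const
  have hμA : (μ A).toReal ≤ 1 := by
    have := prob_le_one (μ := μ) (s := A)
    simpa using ENNReal.toReal_mono (by simp) this
  -- nonnegativity of the squared function
  have hf_nonneg : ∀ ω, (0:ℝ) ≤ (Y ω - c) ^ 2 := fun ω => sq_nonneg _
  by_cases hc : 9 * σ / 4 < |c|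
  · -- Chebyshev case
    set S : Set Ω := {ω | 2 * σ ≤ |Y ω|} with hSdef
    have hSmeas : MeasurableSet S := measurableSet_le measurable_const (by fun_prop)
    have hAS : A ⊆ S := by
      intro ω hω
      simp only [hAdef, Set.mem_setOf_eq, hXz ω] at hω
      simp only [hSdef, Set.mem_setOf_eq]
      have h1 := abs_sub_abs_le_abs_sub c (Y ω)
      rw [abs_sub_comm c (Y ω)] at h1
      linarith
    have hcheb : (2 * σ) ^ 2 * (μ S).toReal ≤ σ2 := by
      have h1 : (2 * σ) ^ 2 * (μ S).toReal ≤ ∫ ω in S, Y ω ^ 2 ∂μ := by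
        have := setIntegral_ge_of_const_le (μ := μ) (f := fun ω => Y ω ^ 2)
          hSmeas (measure_ne_top μ S) (fun ω hω => by
            have : 2 * σ ≤ |Y ω| := hω
            calc (2*σ)^2 ≤ |Y ω| ^ 2 := by nlinarith [abs_nonneg (Y ω)]
              _ = Y ω ^ 2 := sq_abs _) (hX2int.integrableOn)
        rw [smul_eq_mul, mul_comm] at this; exact this
      have h2 : ∫ ω in S, Y ω ^ 2 ∂μ ≤ ∫ ω, Y ω ^ 2 ∂μ :=
        setIntegral_le_integral hX2int (Filter.Eventually.of_forall fun ω => sq_nonneg _)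
      calc (2 * σ) ^ 2 * (μ S).toReal ≤ ∫ ω, Y ω ^ 2 ∂μ := h1.trans h2
        _ = σ2 := hvar
    have hμAS : (μ A).toReal ≤ (μ S).toReal :=
      ENNReal.toReal_mono (measure_ne_top μ S) (measure_mono hAS)
    have hS : (μ S).toReal ≤ 1 / 4 := by
      have h4 : (2 * σ) ^ 2 = 4 * σ2 := by rw [mul_pow]; rw [hσsq]; norm_num
      nlinarith
    calc (μ A).toReal ≤ 1 / 4 := hμAS.trans hS
      _ ≤ 1 - ε := by linarith
  · -- main case : |c| ≤ 9σ/4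
    push_neg at hc
    have hY2int : Integrable (fun ω => Y ω ^ 2) μ := hX2int
    have hYβint : Integrable (fun ω => |Y ω| ^ (2 + β)) μ := hXβint
    have hvar' : ∫ ω, Y ω ^ 2 ∂μ = σ2 := hvar
    have hmom' : ∫ ω, |Y ω| ^ (2 + β) ∂μ = D := hmom
    have hsubint : Integrable (fun ω => Y ω ^ 2 - 2 * c * Y ω) μ :=
      hY2int.sub (hYint.const_mul (2 * c))
    have hf_int : Integrable (fun ω => (Y ω - c) ^ 2) μ := by
      have : (fun ω => (Y ω - c) ^ 2) =
          fun ω => Y ω ^ 2 - 2 * c * Y ω + c ^ 2 := by funext ω; ring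
      rw [this]
      exact hsubint.add (integrable_const _)
    have hf_eq : ∫ ω, (Y ω - c) ^ 2 ∂μ = σ2 + c ^ 2 := by
      have h1 : (fun ω => (Y ω - c) ^ 2) =
          fun ω => Y ω ^ 2 - 2 * c * Y ω + c ^ 2 := by funext ω; ring
      rw [h1, integral_add hsubint (integrable_const _),
        integral_sub hY2int (hYint.const_mul (2 * c)), integral_const_mul, hYmean,
        integral_const, hvar']
      simp
    set T : Set Ω := {ω | |Y ω| ≤ M} with hTdef
    have hTmeas : MeasurableSet T := measurableSet_le (by fun_prop) measurable_const
    -- bound on A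
    have hIA : ∫ ω in A, (Y ω - c) ^ 2 ∂μ ≤ σ2 / 16 := by
      have h1 : ∫ ω in A, (Y ω - c) ^ 2 ∂μ ≤ σ2 / 16 * (μ A).toReal := by
        have := aux_setIntegral_le_const μ hAmeas hf_int.integrableOn
          (fun ω hω => by
            have hω' : |Y ω - c| ≤ σ / 4 := by
              have : |X ω - z| ≤ σ / 4 := hω
              rwa [hXz ω] at this
            calc (Y ω - c) ^ 2 = |Y ω - c| ^ 2 := (sq_abs _).symm
              _ ≤ (σ / 4) ^ 2 := by nlinarith [abs_nonneg (Y ω - c)]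
              _ = σ2 / 16 := by rw [div_pow, hσsq]; ring)
        exact this
      have h2 : σ2 / 16 * (μ A).toReal ≤ σ2 / 16 := by nlinarith
      exact h1.trans h2
    -- bound on Aᶜ ∩ T
    have hIT : ∫ ω in Aᶜ ∩ T, (Y ω - c) ^ 2 ∂μ ≤ (M + 9 * σ / 4) ^ 2 * (μ Aᶜ).toReal := by
      have h1 : ∫ ω in Aᶜ ∩ T, (Y ω - c) ^ 2 ∂μ ≤
          (M + 9 * σ / 4) ^ 2 * (μ (Aᶜ ∩ T)).toReal := by
        apply aux_setIntegral_le_const μ (hAmeas.compl.inter hTmeas) hf_int.integrableOn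
        intro ω hω
        have hYM : |Y ω| ≤ M := hω.2
        have habs : |Y ω - c| ≤ M + 9 * σ / 4 := by
          calc |Y ω - c| ≤ |Y ω| + |c| := abs_sub _ _
            _ ≤ M + 9 * σ / 4 := by linarith
        calc (Y ω - c) ^ 2 = |Y ω - c| ^ 2 := (sq_abs _).symm
          _ ≤ (M + 9 * σ / 4) ^ 2 := by nlinarith [abs_nonneg (Y ω - c)]
      have h2 : (μ (Aᶜ ∩ T)).toReal ≤ (μ Aᶜ).toReal :=
        ENNReal.toReal_mono (measure_ne_top μ Aᶜ) (measure_mono Set.inter_subset_left)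
      nlinarith [sq_nonneg (M + 9 * σ / 4)]
    -- bound on tail
    have hItail : ∫ ω in Tᶜ, (Y ω - c) ^ 2 ∂μ ≤ σ2 / 16 := by
      have hstep : ∀ ω ∈ Tᶜ, (Y ω - c) ^ 2 ≤ 169 / 16 * Y ω ^ 2 := by
        intro ω hω
        have hYM : M < |Y ω| := by
          simpa [hTdef, not_le] using hω
        have habs : |Y ω - c| ≤ 13 / 4 * |Y ω| := by
          calc |Y ω - c| ≤ |Y ω| + |c| := abs_sub _ _
            _ ≤ |Y ω| + 9 * σ / 4 := by linarith
            _ ≤ |Y ω| + 9 / 4 * |Y ω| := by nlinarith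
            _ = 13 / 4 * |Y ω| := by ring
        calc (Y ω - c) ^ 2 = |Y ω - c| ^ 2 := (sq_abs _).symm
          _ ≤ (13 / 4 * |Y ω|) ^ 2 := by nlinarith [abs_nonneg (Y ω - c), abs_nonneg (Y ω)]
          _ = 169 / 16 * Y ω ^ 2 := by rw [mul_pow, sq_abs]; ring
      have h1 : ∫ ω in Tᶜ, (Y ω - c) ^ 2 ∂μ ≤ ∫ ω in Tᶜ, 169 / 16 * Y ω ^ 2 ∂μ :=
        setIntegral_mono_on hf_int.integrableOn
          ((hY2int.const_mul _).integrableOn) hTmeas.compl hstep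
      have hstep2 : ∀ ω ∈ Tᶜ, M ^ β * Y ω ^ 2 ≤ |Y ω| ^ (2 + β) := by
        intro ω hω
        have hYM : M < |Y ω| := by simpa [hTdef, not_le] using hω
        have hYpos : (0:ℝ) < |Y ω| := hM.trans hYM
        have : |Y ω| ^ (2 + β) = |Y ω| ^ (2:ℝ) * |Y ω| ^ β := by
          rw [← Real.rpow_add hYpos]
        rw [this, Real.rpow_two, sq_abs, mul_comm]
        have hβle : M ^ β ≤ |Y ω| ^ β := Real.rpow_le_rpow hM.le hYM.le hβ.le
        nlinarith [sq_nonneg (Y ω)]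
      have h2 : M ^ β * ∫ ω in Tᶜ, Y ω ^ 2 ∂μ ≤ D := by
        calc M ^ β * ∫ ω in Tᶜ, Y ω ^ 2 ∂μ = ∫ ω in Tᶜ, M ^ β * Y ω ^ 2 ∂μ := by
              rw [integral_const_mul]
          _ ≤ ∫ ω in Tᶜ, |Y ω| ^ (2 + β) ∂μ :=
              setIntegral_mono_on ((hY2int.const_mul _).integrableOn)
                (hYβint.integrableOn) hTmeas.compl hstep2
          _ ≤ ∫ ω, |Y ω| ^ (2 + β) ∂μ :=
              setIntegral_le_integral hYβint (Filter.Eventually.of_forall fun ω => by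
                positivity)
          _ = D := hmom'
      have h3 : ∫ ω in Tᶜ, Y ω ^ 2 ∂μ ≤ D / M ^ β := by
        rw [le_div_iff₀ hMβpos]; linarith
      have h4 : D / M ^ β ≤ σ2 / 169 := by
        rw [div_le_div_iff₀ hMβpos (by norm_num : (0:ℝ) < 169)]
        have h := (div_le_iff₀ hσ2).mp hMβ
        linarith
      calc ∫ ω in Tᶜ, (Y ω - c) ^ 2 ∂μ ≤ ∫ ω in Tᶜ, 169 / 16 * Y ω ^ 2 ∂μ := h1
        _ = 169 / 16 * ∫ ω in Tᶜ, Y ω ^ 2 ∂μ := integral_const_mul _ _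
        _ ≤ 169 / 16 * (σ2 / 169) := by nlinarith
        _ = σ2 / 16 := by ring
    -- splitting
    have hsplit : ∫ ω in Aᶜ, (Y ω - c) ^ 2 ∂μ =
        (∫ ω in Aᶜ ∩ T, (Y ω - c) ^ 2 ∂μ) + ∫ ω in Aᶜ \ T, (Y ω - c) ^ 2 ∂μ :=
      (integral_inter_add_diff hTmeas hf_int.integrableOn).symm
    have hdiff : ∫ ω in Aᶜ \ T, (Y ω - c) ^ 2 ∂μ ≤ ∫ ω in Tᶜ, (Y ω - c) ^ 2 ∂μ :=
      setIntegral_mono_set hf_int.integrableOn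
        (Filter.Eventually.of_forall hf_nonneg)
        (HasSubset.Subset.eventuallyLE (Set.diff_subset_compl _ _))
    have htotal : ∫ ω, (Y ω - c) ^ 2 ∂μ =
        (∫ ω in A, (Y ω - c) ^ 2 ∂μ) + ∫ ω in Aᶜ, (Y ω - c) ^ 2 ∂μ :=
      (integral_add_compl hAmeas hf_int).symm
    have hkey : σ2 ≤ σ2 / 16 + ((M + 9 * σ / 4) ^ 2 * (μ Aᶜ).toReal + σ2 / 16) := by
      have h0 : σ2 ≤ ∫ ω, (Y ω - c) ^ 2 ∂μ := by rw [hf_eq]; nlinarith [sq_nonneg c]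
      rw [htotal] at h0
      have hAc : ∫ ω in Aᶜ, (Y ω - c) ^ 2 ∂μ ≤
          (M + 9 * σ / 4) ^ 2 * (μ Aᶜ).toReal + σ2 / 16 := by
        rw [hsplit]
        have := hdiff.trans hItail
        linarith
      linarith
    -- conclude
    have hcompl : (μ Aᶜ).toReal = 1 - (μ A).toReal := by
      rw [prob_compl_eq_one_sub hAmeas,
        ENNReal.toReal_sub_of_le (prob_le_one) (by simp)]
      simp
    have hMpos : (0:ℝ) < (M + 9 * σ / 4) ^ 2 := by positivity
    have hp : ε ≤ (μ Aᶜ).toReal := by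
      have h1 : 7 / 8 * σ2 ≤ (M + 9 * σ / 4) ^ 2 * (μ Aᶜ).toReal := by linarith
      have h2 : 7 / 8 * σ2 / (M + 9 * σ / 4) ^ 2 ≤ (μ Aᶜ).toReal := by
        rw [div_le_iff₀ hMpos]; nlinarith
      linarith
    rw [hcompl] at hp
    linarith
end

section
/- Let y ∈ [0,∞)ⁿ and w ∈ (0,1]. Define 𝒮 as the collection of subsets S ⊆ {1,...,n} such that for all i ∈ S, y_i > (w ∏_{j∈S} y_j)^{1/|S|}. Then min over a ∈ [0,1]ⁿ with ∏ aᵢ ≥ w of ∑ aᵢyᵢ equals min over S ∈ 𝒮 of [∑_{i∉S} yᵢ + |S|·(w ∏_{i∈S} yᵢ)^{1/|S|}]. -/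
open Finset

lemma amgm_aux {n : ℕ} (S : Finset (Fin n)) (z : Fin n → ℝ) (hz : ∀ i ∈ S, 0 ≤ z i) :
    (S.card : ℝ) * (∏ i ∈ S, z i) ^ ((1:ℝ)/S.card) ≤ ∑ i ∈ S, z i := by
  rcases S.eq_empty_or_nonempty with h | h
  · simp [h]
  · have hk : (0:ℝ) < S.card := by exact_mod_cast card_pos.mpr h
    have H := Real.geom_mean_le_arith_mean_weighted S (fun _ => 1/S.card) z
      (fun i _ => by positivity) (by rw [Finset.sum_const, nsmul_eq_mul]; exact mul_one_div_cancel hk.ne') hz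
    rw [← Real.finset_prod_rpow S z hz ((1:ℝ)/S.card)]
    rw [← Finset.mul_sum] at H
    calc (S.card : ℝ) * ∏ i ∈ S, z i ^ ((1:ℝ)/S.card)
        ≤ (S.card : ℝ) * ((1/S.card) * ∑ i ∈ S, z i) := by
          exact mul_le_mul_of_nonneg_left H hk.le
      _ = ∑ i ∈ S, z i := by field_simp

lemma prod_filter_ge {n : ℕ} (w : ℝ) (a : Fin n → ℝ) (ha : ∀ i, a i ∈ Set.Icc (0:ℝ) 1)
    (haw : w ≤ ∏ i, a i) (S : Finset (Fin n)) : w ≤ ∏ i ∈ S, a i := by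
  calc w ≤ ∏ i, a i := haw
    _ = (∏ i ∈ S, a i) * ∏ i ∈ Sᶜ, a i := (Finset.prod_mul_prod_compl S a).symm
    _ ≤ (∏ i ∈ S, a i) * 1 := by
        refine mul_le_mul_of_nonneg_left ?_ (Finset.prod_nonneg fun i _ => (ha i).1)
        exact Finset.prod_le_one (fun i _ => (ha i).1) (fun i _ => (ha i).2)
    _ = ∏ i ∈ S, a i := mul_one _

lemma caseA {n : ℕ} (y : Fin n → ℝ) (hy : ∀ i, 0 ≤ y i) (w : ℝ) (hw0 : 0 < w)
    (a : Fin n → ℝ) (ha : ∀ i, a i ∈ Set.Icc (0:ℝ) 1) (haw : w ≤ ∏ i, a i) :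
    ∑ i ∈ (univ.filter (fun i => a i < 1 ∧ 0 < y i))ᶜ, y i
      + (univ.filter (fun i => a i < 1 ∧ 0 < y i)).card
        * (w * ∏ i ∈ univ.filter (fun i => a i < 1 ∧ 0 < y i), y i)
          ^ ((1:ℝ)/(univ.filter (fun i => a i < 1 ∧ 0 < y i)).card)
      ≤ ∑ i, a i * y i := by
  set S : Finset (Fin n) := univ.filter (fun i => a i < 1 ∧ 0 < y i) with hS
  have h1 : ∑ i ∈ Sᶜ, y i = ∑ i ∈ Sᶜ, a i * y i := by
    refine Finset.sum_congr rfl fun i hi => ?_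
    have : ¬ (a i < 1 ∧ 0 < y i) := by
      intro hc; exact (Finset.mem_compl.mp hi) (by simp [hS, hc])
    rcases not_and_or.mp this with h | h
    · have : a i = 1 := le_antisymm (ha i).2 (not_lt.mp h)
      rw [this, one_mul]
    · have : y i = 0 := le_antisymm (not_lt.mp h) (hy i)
      rw [this, mul_zero]
  have h2 : (S.card : ℝ) * (w * ∏ i ∈ S, y i) ^ ((1:ℝ)/S.card) ≤ ∑ i ∈ S, a i * y i := by
    refine le_trans ?_ (amgm_aux S (fun i => a i * y i)
      (fun i _ => mul_nonneg ((ha i).1) (hy i)))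
    refine mul_le_mul_of_nonneg_left ?_ (by positivity)
    refine Real.rpow_le_rpow (mul_nonneg hw0.le (Finset.prod_nonneg fun i _ => hy i)) ?_ (by positivity)
    have : ∏ i ∈ S, (a i * y i) = (∏ i ∈ S, a i) * ∏ i ∈ S, y i := Finset.prod_mul_distrib
    rw [this]
    exact mul_le_mul_of_nonneg_right (prod_filter_ge w a ha haw S)
      (Finset.prod_nonneg fun i _ => hy i)
  calc ∑ i ∈ Sᶜ, y i + (S.card : ℝ) * (w * ∏ i ∈ S, y i) ^ ((1:ℝ)/S.card)
      ≤ ∑ i ∈ Sᶜ, a i * y i + ∑ i ∈ S, a i * y i := by rw [h1]; exact add_le_add le_rfl h2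
    _ = ∑ i, a i * y i := by rw [add_comm]; exact Finset.sum_add_sum_compl S _

lemma caseB {n : ℕ} (y : Fin n → ℝ) (hy : ∀ i, 0 ≤ y i) (w : ℝ) (hw0 : 0 < w) (hw1 : w ≤ 1)
    (a : Fin n → ℝ) (ha : ∀ i, a i ∈ Set.Icc (0:ℝ) 1) (haw : w ≤ ∏ i, a i)
    (i : Fin n) (hi : i ∈ univ.filter (fun j => a j < 1 ∧ 0 < y j))
    (hbad : y i ≤ (w * ∏ j ∈ univ.filter (fun j => a j < 1 ∧ 0 < y j), y j)
      ^ ((1:ℝ)/(univ.filter (fun j => a j < 1 ∧ 0 < y j)).card)) :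
    ∃ a' : Fin n → ℝ, (∀ j, a' j ∈ Set.Icc (0:ℝ) 1) ∧ w ≤ ∏ j, a' j ∧
      (univ.filter (fun j => a' j < 1 ∧ 0 < y j))
        = (univ.filter (fun j => a j < 1 ∧ 0 < y j)).erase i ∧
      ∑ j, a' j * y j ≤ ∑ j, a j * y j := by
  set S₀ : Finset (Fin n) := univ.filter (fun j => a j < 1 ∧ 0 < y j) with hS₀
  set k := S₀.card with hk
  set P := ∏ j ∈ S₀, y j with hP
  set g := (w * P) ^ ((1:ℝ)/k) with hg
  obtain ⟨hai1, hyi⟩ : a i < 1 ∧ 0 < y i := by simpa [hS₀] using hi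
  -- all a j positive
  have hapos : ∀ j, 0 < a j := by
    intro j
    rcases lt_or_eq_of_le (ha j).1 with h | h
    · exact h
    · exfalso
      have : ∏ l, a l = 0 := Finset.prod_eq_zero (mem_univ j) h.symm
      rw [this] at haw; linarith
  -- y positive on S₀, so P > 0
  have hPpos : 0 < P := Finset.prod_pos (fun j hj => by
    simp only [hS₀, mem_filter] at hj; exact hj.2.2)
  have hgpos : 0 < g := lt_of_lt_of_le hyi hbad
  -- k ≥ 2
  have hk1 : 1 ≤ k := Finset.card_pos.mpr ⟨i, hi⟩
  have hk2 : 2 ≤ k := by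
    by_contra h
    have hk1' : k = 1 := le_antisymm (by omega) hk1
    have hSi : S₀ = {i} := by
      apply Finset.eq_singleton_iff_unique_mem.mpr
      exact ⟨hi, fun x hx => Finset.card_le_one.mp (le_of_eq hk1') x hx i hi⟩
    have hgval : g = w * y i := by
      rw [hg, hP, hSi, hk, hSi]
      simp
    rw [hgval] at hbad
    have hw1' : 1 ≤ w := by
      have := hbad
      nlinarith
    have hweq : w = 1 := le_antisymm hw1 hw1'
    -- then ∏ a ≥ 1 but ∏ a ≤ a i < 1
    have : ∏ l, a l ≤ a i := by
      calc ∏ l, a l = a i * ∏ l ∈ univ.erase i, a l := (Finset.mul_prod_erase univ a (mem_univ i)).symm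
        _ ≤ a i * 1 := by
            refine mul_le_mul_of_nonneg_left ?_ (ha i).1
            exact Finset.prod_le_one (fun l _ => (ha l).1) (fun l _ => (ha l).2)
        _ = a i := mul_one _
    rw [hweq] at haw
    linarith
  set m := k - 1 with hm
  have hm1 : 1 ≤ m := by omega
  have hmk : m + 1 = k := by omega
  have hmR : ((m:ℝ)) ≠ 0 := by
    simp only [ne_eq, Nat.cast_eq_zero]; omega
  set c := (a i) ^ ((1:ℝ)/m) with hc
  have hc0 : 0 < c := Real.rpow_pos_of_pos (hapos i) _
  have hc1 : c ≤ 1 := Real.rpow_le_one (hapos i).le hai1.le (by positivity)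
  have hcm : c ^ m = a i := by
    rw [hc, ← Real.rpow_natCast ((a i) ^ ((1:ℝ)/m)) m, ← Real.rpow_mul (hapos i).le,
      one_div, inv_mul_cancel₀ hmR, Real.rpow_one]
  set a' : Fin n → ℝ := fun j => if j = i then 1 else if j ∈ S₀ then c * a j else a j with ha'
  have ha'i : a' i = 1 := by simp [ha']
  have ha'mem : ∀ j ∈ S₀.erase i, a' j = c * a j := by
    intro j hj
    simp only [Finset.mem_erase] at hj
    simp only [ha']
    rw [if_neg hj.1, if_pos hj.2]
  have ha'out : ∀ j, j ∉ S₀ → a' j = a j := by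
    intro j hj
    have hji : j ≠ i := fun h => hj (h ▸ hi)
    simp only [ha']
    rw [if_neg hji, if_neg hj]
  -- erase card
  have hcarde : (S₀.erase i).card = m := by
    rw [Finset.card_erase_of_mem hi]
  -- a' in Icc
  have ha'icc : ∀ j, a' j ∈ Set.Icc (0:ℝ) 1 := by
    intro j
    by_cases hji : j = i
    · subst hji; rw [ha'i]; exact ⟨zero_le_one, le_refl 1⟩
    · by_cases hjS : j ∈ S₀
      · rw [ha'mem j (Finset.mem_erase.mpr ⟨hji, hjS⟩)]
        constructor
        · exact mul_nonneg hc0.le (ha j).1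
        · exact mul_le_one₀ hc1 (ha j).1 (ha j).2
      · rw [ha'out j hjS]; exact ha j
  -- product unchanged
  have hprod' : ∏ j, a' j = ∏ j, a j := by
    rw [← Finset.prod_mul_prod_compl S₀ a', ← Finset.prod_mul_prod_compl S₀ a]
    have h1 : ∏ j ∈ S₀ᶜ, a' j = ∏ j ∈ S₀ᶜ, a j :=
      Finset.prod_congr rfl (fun j hj => ha'out j (Finset.mem_compl.mp hj))
    have h2 : ∏ j ∈ S₀, a' j = ∏ j ∈ S₀, a j := by
      rw [← Finset.mul_prod_erase S₀ a' hi, ← Finset.mul_prod_erase S₀ a hi]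
      rw [ha'i, one_mul]
      rw [Finset.prod_congr rfl (ha'mem)]
      rw [Finset.prod_mul_distrib, Finset.prod_const, hcarde, hcm]
    rw [h1, h2]
  -- filter identity
  have hfilt : (univ.filter (fun j => a' j < 1 ∧ 0 < y j)) = S₀.erase i := by
    ext j
    simp only [Finset.mem_filter, Finset.mem_univ, true_and, Finset.mem_erase]
    by_cases hji : j = i
    · subst hji
      rw [ha'i]
      simp
    · by_cases hjS : j ∈ S₀
      · have hj' := hjS
        rw [hS₀] at hj'
        simp only [Finset.mem_filter, Finset.mem_univ, true_and] at hj'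
        rw [ha'mem j (Finset.mem_erase.mpr ⟨hji, hjS⟩)]
        have : c * a j < 1 := lt_of_le_of_lt (mul_le_of_le_one_left (ha j).1 hc1) hj'.1
        simp [this, hj'.2, hji, hjS]
      · have hj' := hjS
        rw [hS₀] at hj'
        simp only [Finset.mem_filter, Finset.mem_univ, true_and] at hj'
        rw [ha'out j hjS]
        simp only [hji, hjS, and_false, iff_false]
        exact hj'
  -- the sum inequality
  -- g ^ k = w * P
  have hgk : g ^ k = w * P := by
    rw [hg, ← Real.rpow_natCast ((w*P) ^ ((1:ℝ)/k)) k, ← Real.rpow_mul (by positivity),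
      one_div, inv_mul_cancel₀ (by simp only [ne_eq, Nat.cast_eq_zero]; omega), Real.rpow_one]
  set T := ∑ j ∈ S₀.erase i, a j * y j with hT
  set Q := ∏ j ∈ S₀.erase i, (a j * y j) with hQ
  have hQ0 : 0 ≤ Q := Finset.prod_nonneg (fun j _ => mul_nonneg (hapos j).le (hy j))
  have hQgm : g ^ m ≤ Q := by
    have h1 : w * P ≤ (a i * y i) * Q := by
      have : (a i * y i) * Q = ∏ j ∈ S₀, (a j * y j) := Finset.mul_prod_erase S₀ (fun j => a j * y j) hi
      rw [this, Finset.prod_mul_distrib]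
      exact mul_le_mul_of_nonneg_right
        (prod_filter_ge w a ha haw S₀) (Finset.prod_nonneg fun j _ => hy j)
    have hay : a i * y i ≤ g := le_trans (mul_le_of_le_one_left (hy i) hai1.le) hbad
    have h2 : g * g ^ m ≤ g * Q := by
      calc g * g ^ m = g ^ k := by rw [← pow_succ', hmk]
        _ = w * P := hgk
        _ ≤ (a i * y i) * Q := h1
        _ ≤ g * Q := mul_le_mul_of_nonneg_right hay hQ0
    exact le_of_mul_le_mul_left h2 hgpos
  have hTmg : (m:ℝ) * g ≤ T := by
    have h1 := amgm_aux (S₀.erase i) (fun j => a j * y j)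
      (fun j _ => mul_nonneg (hapos j).le (hy j))
    rw [hcarde] at h1
    refine le_trans ?_ h1
    have h2 : (g ^ m : ℝ) ^ ((1:ℝ)/m) = g := by
      rw [← Real.rpow_natCast g m, ← Real.rpow_mul hgpos.le, one_div,
        mul_inv_cancel₀ hmR, Real.rpow_one]
    calc (m:ℝ) * g = (m:ℝ) * (g ^ m : ℝ) ^ ((1:ℝ)/m) := by rw [h2]
      _ ≤ (m:ℝ) * Q ^ ((1:ℝ)/m) := by
          refine mul_le_mul_of_nonneg_left ?_ (by positivity)
          exact Real.rpow_le_rpow (by positivity) hQgm (by positivity)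
      _ = _ := rfl
  -- Bernoulli
  have hber : 1 - c ^ m ≤ (m:ℝ) * (1 - c) := by
    have := one_add_mul_le_pow (a := c - 1) (by linarith) m
    have h' : (1 : ℝ) + m * (c - 1) ≤ c ^ m := by simpa using this
    nlinarith
  have hsum : ∑ j, a' j * y j ≤ ∑ j, a j * y j := by
    rw [← Finset.sum_add_sum_compl S₀ (fun j => a' j * y j),
        ← Finset.sum_add_sum_compl S₀ (fun j => a j * y j)]
    have hcompl : ∑ j ∈ S₀ᶜ, a' j * y j = ∑ j ∈ S₀ᶜ, a j * y j :=
      Finset.sum_congr rfl (fun j hj => by rw [ha'out j (Finset.mem_compl.mp hj)])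
    rw [hcompl]
    refine add_le_add ?_ (le_refl _)
    rw [← Finset.add_sum_erase S₀ (fun j => a' j * y j) hi,
        ← Finset.add_sum_erase S₀ (fun j => a j * y j) hi]
    have hsum' : ∑ j ∈ S₀.erase i, a' j * y j = c * T := by
      rw [hT, Finset.mul_sum]
      refine Finset.sum_congr rfl (fun j hj => ?_)
      rw [ha'mem j hj]; ring
    rw [hsum', ha'i, one_mul]
    -- goal : y i + c * T ≤ a i * y i + T
    have key1 : (1 - a i) * y i ≤ (1 - c) * T := by
      calc (1 - a i) * y i = (1 - c ^ m) * y i := by rw [hcm]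
        _ ≤ ((m:ℝ) * (1 - c)) * y i := mul_le_mul_of_nonneg_right hber (hy i)
        _ ≤ ((m:ℝ) * (1 - c)) * g := by
            refine mul_le_mul_of_nonneg_left hbad ?_
            have : (0:ℝ) ≤ (m:ℝ) := by positivity
            nlinarith
        _ = (1 - c) * ((m:ℝ) * g) := by ring
        _ ≤ (1 - c) * T := mul_le_mul_of_nonneg_left hTmg (by linarith)
    linarith
  exact ⟨a', ha'icc, hprod' ▸ haw, hfilt, hsum⟩

lemma key {n : ℕ} (y : Fin n → ℝ) (hy : ∀ i, 0 ≤ y i) (w : ℝ) (hw0 : 0 < w) (hw1 : w ≤ 1) :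
    ∀ N : ℕ, ∀ a : Fin n → ℝ, (∀ i, a i ∈ Set.Icc (0:ℝ) 1) → w ≤ ∏ i, a i →
    (univ.filter (fun i => a i < 1 ∧ 0 < y i)).card ≤ N →
    ∃ S : Finset (Fin n), (∀ i ∈ S, (w * ∏ j ∈ S, y j) ^ ((1:ℝ)/S.card) < y i) ∧
      ∑ i ∈ Sᶜ, y i + S.card * (w * ∏ i ∈ S, y i) ^ ((1:ℝ)/S.card) ≤ ∑ i, a i * y i := by
  intro N
  induction N with
  | zero =>
    intro a ha haw hcard
    refine ⟨univ.filter (fun i => a i < 1 ∧ 0 < y i), ?_, caseA y hy w hw0 a ha haw⟩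
    intro i hicard
    have h0 : univ.filter (fun i => a i < 1 ∧ 0 < y i) = ∅ :=
      Finset.card_eq_zero.mp (Nat.le_zero.mp hcard)
    rw [h0] at hicard; exact absurd hicard (Finset.notMem_empty i)
  | succ N ih =>
    intro a ha haw hcard
    by_cases hadm : ∀ i ∈ univ.filter (fun i => a i < 1 ∧ 0 < y i),
        (w * ∏ j ∈ univ.filter (fun i => a i < 1 ∧ 0 < y i), y j)
          ^ ((1:ℝ)/(univ.filter (fun i => a i < 1 ∧ 0 < y i)).card) < y i
    · exact ⟨_, hadm, caseA y hy w hw0 a ha haw⟩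
    · push_neg at hadm
      obtain ⟨i, hi, hbad⟩ := hadm
      obtain ⟨a', ha'icc, ha'w, hfilt, hsum⟩ := caseB y hy w hw0 hw1 a ha haw i hi hbad
      have hpos := Finset.card_pos.mpr ⟨i, hi⟩
      have hcard' : (univ.filter (fun j => a' j < 1 ∧ 0 < y j)).card ≤ N := by
        rw [hfilt, Finset.card_erase_of_mem hi]
        omega
      obtain ⟨S, hS1, hS2⟩ := ih a' ha'icc ha'w hcard'
      exact ⟨S, hS1, le_trans hS2 hsum⟩

/-- Characterization of the regularized weighted sum: the minimum of `∑ aᵢyᵢ` over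
weights `a ∈ [0,1]ⁿ` with `∏ aᵢ ≥ w` equals the minimum over admissible sets `S`
(those with `yᵢ > (w ∏_{j∈S} yⱼ)^{1/|S|}` for all `i ∈ S`) of
`∑_{i∉S} yᵢ + |S| (w ∏_{i∈S} yᵢ)^{1/|S|}`. -/
theorem stmt_9 (n : ℕ) (y : Fin n → ℝ) (hy : ∀ i, 0 ≤ y i)
    (w : ℝ) (hw : w ∈ Set.Ioc (0 : ℝ) 1) :
    sInf {t : ℝ | ∃ a : Fin n → ℝ,
        (∀ i, a i ∈ Set.Icc (0 : ℝ) 1) ∧ w ≤ ∏ i, a i ∧ t = ∑ i, a i * y i}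
      = sInf {t : ℝ | ∃ S : Finset (Fin n),
        (∀ i ∈ S, (w * ∏ j ∈ S, y j) ^ ((1 : ℝ) / S.card) < y i) ∧
        t = ∑ i ∈ Sᶜ, y i + S.card * (w * ∏ i ∈ S, y i) ^ ((1 : ℝ) / S.card)} := by
  obtain ⟨hw0, hw1⟩ := hw
  set L := {t : ℝ | ∃ a : Fin n → ℝ,
      (∀ i, a i ∈ Set.Icc (0 : ℝ) 1) ∧ w ≤ ∏ i, a i ∧ t = ∑ i, a i * y i} with hL
  set R := {t : ℝ | ∃ S : Finset (Fin n),
      (∀ i ∈ S, (w * ∏ j ∈ S, y j) ^ ((1 : ℝ) / S.card) < y i) ∧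
      t = ∑ i ∈ Sᶜ, y i + S.card * (w * ∏ i ∈ S, y i) ^ ((1 : ℝ) / S.card)} with hR
  have hLne : L.Nonempty := by
    refine ⟨∑ i, y i, fun _ => 1, fun i => ⟨zero_le_one, le_refl 1⟩, ?_, by simp⟩
    simp [hw1]
  have hLbdd : BddBelow L := by
    refine ⟨0, fun t ht => ?_⟩
    obtain ⟨a, ha, -, rfl⟩ := ht
    exact Finset.sum_nonneg fun i _ => mul_nonneg (ha i).1 (hy i)
  have hRbdd : BddBelow R := by
    refine ⟨0, fun t ht => ?_⟩
    obtain ⟨S, -, rfl⟩ := ht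
    have h1 : (0:ℝ) ≤ ∑ i ∈ Sᶜ, y i := Finset.sum_nonneg fun i _ => hy i
    have h2 : (0:ℝ) ≤ (w * ∏ i ∈ S, y i) ^ ((1 : ℝ) / S.card) :=
      Real.rpow_nonneg (mul_nonneg hw0.le (Finset.prod_nonneg fun i _ => hy i)) _
    positivity
  have hRL : R ⊆ L := by
    rintro t ⟨S, hadm, rfl⟩
    rcases S.eq_empty_or_nonempty with hS | hS
    · subst hS
      refine ⟨fun _ => 1, fun i => ⟨zero_le_one, le_refl 1⟩, by simp [hw1], ?_⟩
      simp
    · set k := S.card with hk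
      set P := ∏ i ∈ S, y i with hP
      set g := (w * P) ^ ((1:ℝ)/k) with hg
      have hkpos : 0 < k := Finset.card_pos.mpr hS
      have hg0 : 0 ≤ g :=
        Real.rpow_nonneg (mul_nonneg hw0.le (Finset.prod_nonneg fun i _ => hy i)) _
      have hyS : ∀ i ∈ S, 0 < y i := fun i hi => lt_of_le_of_lt hg0 (hadm i hi)
      have hPpos : 0 < P := Finset.prod_pos hyS
      have hgk : g ^ k = w * P := by
        rw [hg, ← Real.rpow_natCast ((w*P) ^ ((1:ℝ)/k)) k, ← Real.rpow_mul (by positivity),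
          one_div, inv_mul_cancel₀ (by simp only [ne_eq, Nat.cast_eq_zero]; omega),
          Real.rpow_one]
      refine ⟨fun i => if i ∈ S then g / y i else 1, ?_, ?_, ?_⟩
      · intro i
        by_cases hiS : i ∈ S
        · simp only [if_pos hiS]
          exact ⟨div_nonneg hg0 (hy i), le_of_lt ((div_lt_one (hyS i hiS)).mpr (hadm i hiS))⟩
        · simp only [if_neg hiS]
          exact ⟨zero_le_one, le_refl 1⟩
      · have : ∏ i, (if i ∈ S then g / y i else 1) = ∏ i ∈ S, (g / y i) := by
          rw [← Finset.prod_mul_prod_compl S]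
          rw [Finset.prod_congr rfl (fun i hi => if_pos hi),
            Finset.prod_congr rfl (fun i hi => if_neg (Finset.mem_compl.mp hi)),
            Finset.prod_const_one, mul_one]
        rw [this, Finset.prod_div_distrib, Finset.prod_const, ← hP, ← hk, hgk,
          mul_div_assoc, div_self hPpos.ne', mul_one]
      · rw [← Finset.sum_add_sum_compl S (fun i => (if i ∈ S then g / y i else 1) * y i)]
        have h1 : ∑ i ∈ S, (if i ∈ S then g / y i else 1) * y i = k * g := by
          rw [Finset.sum_congr rfl (fun i hi => by
            rw [if_pos hi, div_mul_cancel₀ g (hyS i hi).ne'])]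
          rw [Finset.sum_const, nsmul_eq_mul]
        have h2 : ∑ i ∈ Sᶜ, (if i ∈ S then g / y i else 1) * y i = ∑ i ∈ Sᶜ, y i := by
          refine Finset.sum_congr rfl (fun i hi => ?_)
          rw [if_neg (Finset.mem_compl.mp hi), one_mul]
        rw [h1, h2, add_comm]
  refine le_antisymm (csInf_le_csInf hLbdd ⟨_, ⟨∅, by simp, rfl⟩⟩ hRL) ?_
  refine le_csInf hLne ?_
  rintro t ⟨a, ha, haw, rfl⟩
  obtain ⟨S, hS1, hS2⟩ := key y hy w hw0 hw1
    (univ.filter (fun i => a i < 1 ∧ 0 < y i)).card a ha haw (le_refl _)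
  exact le_trans (csInf_le hRbdd ⟨S, hS1, rfl⟩) hS2
end

section
/- Let x ∈ ℝⁿ be a unit vector that is (δ,ρ)-incompressible, i.e., for all y ∈ 𝕊^{n-1} with at most δn nonzero entries, ‖x - y‖₂ > ρ. Then there exists a set J ⊆ {1,...,n} with |J| ≥ (1/2)ρ²δn such that ρ/√(2n) ≤ |xⱼ| ≤ 1/√(δn) for all j ∈ J. -/
open Finset

private lemma esq_16 {n : ℕ} (v : EuclideanSpace ℝ (Fin n)) :
    ‖v‖ ^ 2 = ∑ i, (v i) ^ 2 := by
  rw [EuclideanSpace.norm_eq, Real.sq_sqrt (by positivity)]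
  simp [Real.norm_eq_abs, sq_abs]

private lemma key_16 {n : ℕ} {δ ρ : ℝ} (hρ0 : 0 < ρ)
    {x : EuclideanSpace ℝ (Fin n)} (hx : ‖x‖ = 1)
    (hincomp : ∀ y : EuclideanSpace ℝ (Fin n), ‖y‖ = 1 →
      (Set.ncard {i | y i ≠ 0} : ℝ) ≤ δ * n → ρ < ‖x - y‖)
    (P : Finset (Fin n)) (hcard : (P.card : ℝ) ≤ δ * n)
    (hout : ∑ j ∈ Pᶜ, (x j) ^ 2 ≤ ρ ^ 2 / 2) (hρ1 : ρ < 1) : False := by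
  have hsum : ∑ i, (x i) ^ 2 = 1 := by
    rw [← esq_16 x, hx]; norm_num
  have hsplit : ∑ j ∈ P, (x j) ^ 2 + ∑ j ∈ Pᶜ, (x j) ^ 2 = 1 := by
    rw [Finset.sum_add_sum_compl, hsum]
  set w : EuclideanSpace ℝ (Fin n) := WithLp.toLp 2 (fun j => if j ∈ P then x j else 0) with hw
  have hwi : ∀ j, w j = if j ∈ P then x j else 0 := fun j => rfl
  have hw2 : ‖w‖ ^ 2 = ∑ j ∈ P, (x j) ^ 2 := by
    rw [esq_16 w]
    rw [← Finset.sum_filter_add_sum_filter_not Finset.univ (· ∈ P)]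
    have h1 : ∀ j ∈ Finset.univ.filter (· ∈ P), (w j) ^ 2 = (x j) ^ 2 := by
      intro j hj; rw [hwi j, if_pos (Finset.mem_filter.mp hj).2]
    have h2 : ∀ j ∈ Finset.univ.filter (¬ · ∈ P), (w j) ^ 2 = 0 := by
      intro j hj; rw [hwi j, if_neg (Finset.mem_filter.mp hj).2]; ring
    rw [Finset.sum_congr rfl h1, Finset.sum_congr rfl h2, Finset.sum_const_zero,
      add_zero]
    congr 1
    ext j; simp
  have hρsq : ρ ^ 2 < 1 := by nlinarith
  have hwpos : 0 < ‖w‖ ^ 2 := by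
    rw [hw2]; nlinarith
  set r := ‖w‖ with hr
  have hPc0 : (0:ℝ) ≤ ∑ j ∈ Pᶜ, (x j) ^ 2 := Finset.sum_nonneg fun j _ => sq_nonneg _
  have hr0 : 0 < r := by
    rcases (norm_nonneg w).lt_or_eq with h | h
    · exact h
    · exfalso; rw [hr, ← h] at hwpos; simp at hwpos
  have hr1 : r ≤ 1 := by nlinarith [hsplit, hw2]
  set y : EuclideanSpace ℝ (Fin n) := r⁻¹ • w with hy
  have hyi : ∀ j, y j = r⁻¹ * w j := fun j => rfl
  have hyn : ‖y‖ = 1 := by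
    rw [hy, norm_smul, norm_inv, Real.norm_eq_abs, abs_of_pos hr0]
    field_simp; rfl
  have hsupp : (Set.ncard {i | y i ≠ 0} : ℝ) ≤ δ * n := by
    have hsub : {i | y i ≠ 0} ⊆ (P : Set (Fin n)) := by
      intro i hi
      by_contra hiP
      apply hi
      rw [hyi i, hwi i, if_neg (by simpa using hiP), mul_zero]
    have := Set.ncard_le_ncard hsub (Set.toFinite _)
    rw [Set.ncard_coe_finset] at this
    calc (Set.ncard {i | y i ≠ 0} : ℝ) ≤ (P.card : ℝ) := by exact_mod_cast this
      _ ≤ δ * n := hcard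
  have hdist := hincomp y hyn hsupp
  have hdist2 : ρ ^ 2 < ‖x - y‖ ^ 2 := by
    have := norm_nonneg (x - y)
    nlinarith
  have hxy2 : ‖x - y‖ ^ 2 = 2 - 2 * r := by
    rw [esq_16 (x - y)]
    have hterm : ∀ j, ((x - y) j) ^ 2 =
        if j ∈ P then (1 - r⁻¹) ^ 2 * (x j) ^ 2 else (x j) ^ 2 := by
      intro j
      have : (x - y) j = x j - y j := rfl
      rw [this, hyi j, hwi j]
      by_cases hj : j ∈ P
      · rw [if_pos hj, if_pos hj]; ring
      · rw [if_neg hj, if_neg hj]; ring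
    calc ∑ j, ((x - y) j) ^ 2
        = ∑ j ∈ P, ((x - y) j) ^ 2 + ∑ j ∈ Pᶜ, ((x - y) j) ^ 2 :=
          (Finset.sum_add_sum_compl P _).symm
      _ = (1 - r⁻¹) ^ 2 * ∑ j ∈ P, (x j) ^ 2 + ∑ j ∈ Pᶜ, (x j) ^ 2 := by
          rw [Finset.mul_sum]
          congr 1
          · exact Finset.sum_congr rfl fun j hj => by rw [hterm j, if_pos hj]
          · exact Finset.sum_congr rfl fun j hj => by
              rw [hterm j, if_neg (Finset.mem_compl.mp hj)]
      _ = (1 - r⁻¹) ^ 2 * r ^ 2 + (1 - r ^ 2) := by rw [← hw2]; rw [hw2]; linarith [hsplit, hw2]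
      _ = (r - 1) ^ 2 + (1 - r ^ 2) := by
          congr 1
          have : (1 - r⁻¹) ^ 2 * r ^ 2 = ((1 - r⁻¹) * r) ^ 2 := by ring
          rw [this, sub_mul, one_mul, inv_mul_cancel₀ (ne_of_gt hr0)]
      _ = 2 - 2 * r := by ring
  have houtge : 1 - r ^ 2 ≤ ρ ^ 2 / 2 := by
    rw [hw2] at *; linarith
  nlinarith [hdist2, hxy2, houtge, hr0, hr1]

/-- Incompressible unit vectors have a proportional set of spread coordinates:
if `x ∈ 𝕊^{n-1}` is `(δ,ρ)`-incompressible, there is `J` with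
`|J| ≥ ρ²δn/2` and `ρ/√(2n) ≤ |xⱼ| ≤ 1/√(δn)` for all `j ∈ J`. -/
theorem stmt_16 (n : ℕ) (hn : 1 ≤ n) (δ ρ : ℝ)
    (hδ : δ ∈ Set.Ioo (0 : ℝ) 1) (hρ : ρ ∈ Set.Ioo (0 : ℝ) 1)
    (x : EuclideanSpace ℝ (Fin n)) (hx : ‖x‖ = 1)
    (hincomp : ∀ y : EuclideanSpace ℝ (Fin n), ‖y‖ = 1 →
      (Set.ncard {i | y i ≠ 0} : ℝ) ≤ δ * n → ρ < ‖x - y‖) :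
    ∃ J : Finset (Fin n), (1 / 2) * ρ ^ 2 * δ * n ≤ (J.card : ℝ) ∧
      ∀ j ∈ J, ρ / Real.sqrt (2 * n) ≤ |x j| ∧ |x j| ≤ 1 / Real.sqrt (δ * n) := by
  obtain ⟨hδ0, hδ1⟩ := hδ
  obtain ⟨hρ0, hρ1⟩ := hρ
  have hn0 : (0:ℝ) < n := by exact_mod_cast Nat.lt_of_lt_of_le Nat.zero_lt_one hn
  have hδn : (0:ℝ) < δ * n := by positivity
  have h2n : (0:ℝ) < 2 * n := by positivity
  set c : ℝ := 1 / Real.sqrt (δ * n) with hc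
  set s : ℝ := ρ / Real.sqrt (2 * n) with hs
  have hc2 : c ^ 2 = 1 / (δ * n) := by
    rw [hc, div_pow, one_pow, Real.sq_sqrt hδn.le]
  have hs2 : s ^ 2 = ρ ^ 2 / (2 * n) := by
    rw [hs, div_pow, Real.sq_sqrt h2n.le]
  have hc0 : 0 ≤ c := by positivity
  have hs0 : 0 ≤ s := by positivity
  set A : Finset (Fin n) := Finset.univ.filter (fun j => c < |x j|) with hA
  set J : Finset (Fin n) := Finset.univ.filter
    (fun j => s ≤ |x j| ∧ |x j| ≤ c) with hJ
  refine ⟨J, ?_, fun j hj => (Finset.mem_filter.mp hj).2⟩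
  by_contra hJc
  push_neg at hJc
  have hsum : ∑ i, (x i) ^ 2 = 1 := by
    rw [← esq_16 x, hx]; norm_num
  set a : ℝ := ∑ j ∈ A, (x j) ^ 2 with ha
  have haA : (A.card : ℝ) ≤ δ * n * a := by
    have hb : ∀ j ∈ A, 1 / (δ * n) ≤ (x j) ^ 2 := by
      intro j hj
      have hcj : c < |x j| := (Finset.mem_filter.mp hj).2
      have : c ^ 2 ≤ |x j| ^ 2 := by nlinarith
      rw [hc2, sq_abs] at this; exact this
    have := Finset.card_nsmul_le_sum A (fun j => (x j) ^ 2) (1 / (δ * n)) hb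
    rw [nsmul_eq_mul] at this
    rw [mul_one_div] at this
    rw [div_le_iff₀ hδn] at this
    linarith [this]
  have ha1 : a ≤ 1 := by
    rw [ha, ← hsum]
    exact Finset.sum_le_sum_of_subset_of_nonneg (Finset.subset_univ A)
      (fun i _ _ => sq_nonneg _)
  have hAs : a + ∑ j ∈ Aᶜ, (x j) ^ 2 = 1 := by
    rw [ha, Finset.sum_add_sum_compl, hsum]
  by_cases hcase : 1 - ρ ^ 2 / 2 ≤ a
  · exact key_16 hρ0 hx hincomp A (by nlinarith) (by linarith) hρ1
  · push_neg at hcase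
    refine key_16 hρ0 hx hincomp (A ∪ J) ?_ ?_ hρ1
    · have h1 : ((A ∪ J).card : ℝ) ≤ (A.card : ℝ) + (J.card : ℝ) := by
        exact_mod_cast Finset.card_union_le A J
      nlinarith
    · have hsmall : ∀ j ∈ (A ∪ J)ᶜ, (x j) ^ 2 ≤ ρ ^ 2 / (2 * n) := by
        intro j hj
        rw [Finset.mem_compl, Finset.mem_union] at hj
        push_neg at hj
        obtain ⟨hjA, hjJ⟩ := hj
        rw [hA, Finset.mem_filter] at hjA
        rw [hJ, Finset.mem_filter] at hjJ
        push_neg at hjA hjJ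
        have h1 : |x j| ≤ c := hjA (Finset.mem_univ j)
        have h2 : |x j| < s := by
          by_contra hge
          push_neg at hge
          exact absurd (hjJ (Finset.mem_univ j) hge) (not_lt.mpr h1)
        have : |x j| ^ 2 ≤ s ^ 2 := by nlinarith [abs_nonneg (x j)]
        rw [hs2, sq_abs] at this; exact this
      have hcard : ((A ∪ J)ᶜ.card : ℝ) ≤ n := by
        have h := Finset.card_le_univ ((A ∪ J)ᶜ)
        simp only [Finset.card_univ, Fintype.card_fin] at h
        exact_mod_cast h
      calc ∑ j ∈ (A ∪ J)ᶜ, (x j) ^ 2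
          ≤ ((A ∪ J)ᶜ.card : ℝ) * (ρ ^ 2 / (2 * n)) := by
            have := Finset.sum_le_card_nsmul ((A ∪ J)ᶜ) (fun j => (x j) ^ 2)
              (ρ ^ 2 / (2 * n)) hsmall
            rwa [nsmul_eq_mul] at this
        _ ≤ (n : ℝ) * (ρ ^ 2 / (2 * n)) := by
            apply mul_le_mul_of_nonneg_right hcard (by positivity)
        _ = ρ ^ 2 / 2 := by field_simp
end

section
/- Let Y₁,...,Y_d be independent real random variables such that for some p > 0 and t₀ ∈ (0,1), P(|Yᵢ| ≤ t) ≤ p·t for every i and every t ≥ t₀. Then there is an absolute constant C > 0 such that for all t ≥ t₀, P(∑_{i=1}^d Yᵢ² ≤ t²d) ≤ (C p t)^d. -/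
open MeasureTheory ProbabilityTheory

lemma aux_factor_bound {Ω : Type} [MeasurableSpace Ω] (μ : Measure Ω) [IsProbabilityMeasure μ]
    (Z : Ω → ℝ) (hZ : Measurable Z) (p t t₀ : ℝ) (hp : 0 < p) (ht0 : 0 < t₀) (ht : t₀ ≤ t)
    (hsb : ∀ s : ℝ, t₀ ≤ s → (μ {ω | |Z ω| ≤ s}).toReal ≤ p * s) :
    ∫ ω, Real.exp (-(1 / t ^ 2) * (Z ω) ^ 2) ∂μ ≤ 4 * (p * t) := by
  have htpos : 0 < t := ht0.trans_le ht
  set r : ℝ := 2 / Real.exp 1 with hr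
  have he1 : (2.7182818283 : ℝ) < Real.exp 1 := Real.exp_one_gt_d9
  have hr0 : 0 ≤ r := by positivity
  have hr1 : r ≤ 3 / 4 := by
    rw [hr, div_le_iff₀ (Real.exp_pos 1)]; nlinarith
  have hsetm : ∀ k : ℕ, MeasurableSet {ω | |Z ω| ≤ ((k : ℝ) + 1) * t} :=
    fun k => measurableSet_le hZ.abs measurable_const
  have hmeas : Measurable fun ω => Real.exp (-(1 / t ^ 2) * (Z ω) ^ 2) :=
    ((hZ.pow_const 2).const_mul _).exp
  rw [integral_eq_lintegral_of_nonneg_ae (ae_of_all _ fun ω => (Real.exp_pos _).le)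
    hmeas.aestronglyMeasurable]
  refine ENNReal.toReal_le_of_le_ofReal (by positivity) ?_
  have key : ∀ ω, ENNReal.ofReal (Real.exp (-(1 / t ^ 2) * (Z ω) ^ 2)) ≤
      ∑' k : ℕ, Set.indicator {ω | |Z ω| ≤ ((k : ℝ) + 1) * t}
        (fun _ => ENNReal.ofReal (Real.exp (-(k : ℝ) ^ 2))) ω := by
    intro ω
    set k := ⌊|Z ω| / t⌋₊ with hk
    refine le_trans ?_ (ENNReal.le_tsum k)
    have h1 : |Z ω| ≤ ((k : ℝ) + 1) * t := by
      have h := Nat.lt_floor_add_one (|Z ω| / t)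
      rw [div_lt_iff₀ htpos] at h
      exact le_of_lt (by exact_mod_cast h)
    rw [Set.indicator_of_mem (show ω ∈ {ω | |Z ω| ≤ ((k : ℝ) + 1) * t} from h1)]
    apply ENNReal.ofReal_le_ofReal
    apply Real.exp_le_exp.2
    have h2 : (k : ℝ) ≤ |Z ω| / t := Nat.floor_le (by positivity)
    have h3 : (k : ℝ) ^ 2 ≤ (|Z ω| / t) ^ 2 := pow_le_pow_left₀ (by positivity) h2 2
    have h4 : (|Z ω| / t) ^ 2 = (Z ω) ^ 2 / t ^ 2 := by rw [div_pow, sq_abs]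
    have h5 : (k : ℝ) ^ 2 ≤ (Z ω) ^ 2 / t ^ 2 := h4 ▸ h3
    have h6 : -(1 / t ^ 2) * (Z ω) ^ 2 = -((Z ω) ^ 2 / t ^ 2) := by ring
    linarith
  have termbd : ∀ k : ℕ, ENNReal.ofReal (Real.exp (-(k : ℝ) ^ 2)) *
      μ {ω | |Z ω| ≤ ((k : ℝ) + 1) * t} ≤ ENNReal.ofReal (r ^ k * (p * t)) := by
    intro k
    have hkt : t₀ ≤ ((k : ℝ) + 1) * t := by nlinarith [Nat.cast_nonneg (α := ℝ) k]
    have hμ : μ {ω | |Z ω| ≤ ((k : ℝ) + 1) * t} ≤ ENNReal.ofReal (p * (((k : ℝ) + 1) * t)) := by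
      rw [ENNReal.le_ofReal_iff_toReal_le (measure_ne_top μ _) (by positivity)]
      exact hsb _ hkt
    calc ENNReal.ofReal (Real.exp (-(k : ℝ) ^ 2)) * μ {ω | |Z ω| ≤ ((k : ℝ) + 1) * t}
        ≤ ENNReal.ofReal (Real.exp (-(k : ℝ) ^ 2)) *
          ENNReal.ofReal (p * (((k : ℝ) + 1) * t)) := mul_le_mul_right hμ _
      _ = ENNReal.ofReal (Real.exp (-(k : ℝ) ^ 2) * (p * (((k : ℝ) + 1) * t))) :=
          (ENNReal.ofReal_mul (Real.exp_pos _).le).symm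
      _ ≤ ENNReal.ofReal (r ^ k * (p * t)) := by
          apply ENNReal.ofReal_le_ofReal
          have hk2 : (k : ℝ) ≤ (k : ℝ) ^ 2 := by
            have h := Nat.le_self_pow (two_ne_zero) k
            exact_mod_cast h
          have he2 : Real.exp (-(k : ℝ) ^ 2) ≤ (Real.exp 1)⁻¹ ^ k := by
            rw [inv_pow, Real.exp_one_pow, ← Real.exp_neg]
            exact Real.exp_le_exp.2 (by linarith)
          have hk1 : (k : ℝ) + 1 ≤ 2 ^ k := by
            have h : k + 1 ≤ 2 ^ k := Nat.lt_two_pow_self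
            exact_mod_cast h
          have hie : (0:ℝ) ≤ (Real.exp 1)⁻¹ ^ k := by positivity
          calc Real.exp (-(k : ℝ) ^ 2) * (p * (((k : ℝ) + 1) * t))
              ≤ (Real.exp 1)⁻¹ ^ k * (p * ((2 : ℝ) ^ k * t)) := by
                apply mul_le_mul he2 ?_ (by positivity) hie
                exact mul_le_mul_of_nonneg_left
                  (mul_le_mul_of_nonneg_right hk1 htpos.le) hp.le
            _ = r ^ k * (p * t) := by
                rw [hr, div_eq_mul_inv, mul_pow]; ring
  calc ∫⁻ ω, ENNReal.ofReal (Real.exp (-(1 / t ^ 2) * (Z ω) ^ 2)) ∂μ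
      ≤ ∫⁻ ω, ∑' k : ℕ, Set.indicator {ω | |Z ω| ≤ ((k : ℝ) + 1) * t}
          (fun _ => ENNReal.ofReal (Real.exp (-(k : ℝ) ^ 2))) ω ∂μ := lintegral_mono key
    _ = ∑' k : ℕ, ∫⁻ ω, Set.indicator {ω | |Z ω| ≤ ((k : ℝ) + 1) * t}
          (fun _ => ENNReal.ofReal (Real.exp (-(k : ℝ) ^ 2))) ω ∂μ :=
        lintegral_tsum fun k => (measurable_const.indicator (hsetm k)).aemeasurable
    _ = ∑' k : ℕ, ENNReal.ofReal (Real.exp (-(k : ℝ) ^ 2)) *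
          μ {ω | |Z ω| ≤ ((k : ℝ) + 1) * t} := by
        refine tsum_congr fun k => ?_
        rw [lintegral_indicator_const (hsetm k)]
    _ ≤ ∑' k : ℕ, ENNReal.ofReal (r ^ k * (p * t)) := ENNReal.tsum_le_tsum termbd
    _ = ENNReal.ofReal (∑' k : ℕ, r ^ k * (p * t)) :=
        (ENNReal.ofReal_tsum_of_nonneg (fun k => by positivity)
          ((summable_geometric_of_lt_one hr0 (by linarith)).mul_right _)).symm
    _ ≤ ENNReal.ofReal (4 * (p * t)) := by
        apply ENNReal.ofReal_le_ofReal
        rw [tsum_mul_right, tsum_geometric_of_lt_one hr0 (by linarith)]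
        have h14 : (1 - r)⁻¹ ≤ 4 := by
          rw [inv_le_comm₀ (by linarith) (by norm_num)]
          linarith
        nlinarith [mul_pos hp htpos]

set_option maxHeartbeats 1000000 in
/-- Tensorization lemma (Rudelson–Vershynin): there is an absolute constant `C` such
that if `Y₁,…,Y_d` are independent with `P(|Yᵢ| ≤ t) ≤ p t` for all `t ≥ t₀`, then
`P(∑ Yᵢ² ≤ t² d) ≤ (C p t)^d` for all `t ≥ t₀`. -/
theorem stmt_19 :
    ∃ C > (0 : ℝ),
      ∀ {Ω : Type} [MeasurableSpace Ω] (μ : Measure Ω) [IsProbabilityMeasure μ]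
        (d : ℕ), 1 ≤ d →
        ∀ (Y : Fin d → Ω → ℝ), (∀ i, Measurable (Y i)) →
        iIndepFun Y μ →
        ∀ (p t₀ : ℝ), 0 < p → t₀ ∈ Set.Ioo (0 : ℝ) 1 →
        (∀ i, ∀ t : ℝ, t₀ ≤ t → (μ {ω | |Y i ω| ≤ t}).toReal ≤ p * t) →
        ∀ t : ℝ, t₀ ≤ t →
          (μ {ω | ∑ i, (Y i ω) ^ 2 ≤ t ^ 2 * d}).toReal ≤ (C * p * t) ^ d := by
  refine ⟨11, by norm_num, ?_⟩
  intro Ω _ μ _ d hd Y hY hindep p t₀ hp ht₀ hsb t ht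
  obtain ⟨ht₀0, _⟩ := ht₀
  have htpos : 0 < t := ht₀0.trans_le ht
  set v : ℝ := -(1 / t ^ 2) with hv
  have hvle : v ≤ 0 := by rw [hv]; simp; positivity
  set X : Fin d → Ω → ℝ := fun i ω => (Y i ω) ^ 2 with hX
  have hXmeas : ∀ i, Measurable (X i) := fun i => (hY i).pow_const 2
  have hXindep : iIndepFun X μ :=
    hindep.comp (fun _ x => x ^ 2) fun _ => measurable_id.pow_const 2
  have hXnn : ∀ i ω, 0 ≤ X i ω := fun i ω => sq_nonneg _
  have hSsum : (∑ i, X i) = fun ω => ∑ i, X i ω := by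
    funext ω; simp [Finset.sum_apply]
  have hintsum : Integrable (fun ω => Real.exp (v * (∑ i, X i) ω)) μ := by
    rw [hSsum]
    refine Integrable.mono' (integrable_const 1)
      (((Finset.measurable_sum Finset.univ fun i _ => hXmeas i).const_mul v).exp.aestronglyMeasurable)
      (ae_of_all _ fun ω => ?_)
    rw [Real.norm_eq_abs, abs_of_nonneg (Real.exp_pos _).le, Real.exp_le_one_iff]
    exact mul_nonpos_of_nonpos_of_nonneg hvle (Finset.sum_nonneg fun i _ => hXnn i ω)
  have chernoff := measure_le_le_exp_mul_mgf (μ := μ) (X := ∑ i, X i) (t := v)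
    (t ^ 2 * d) hvle hintsum
  have hset : {ω | (∑ i, X i) ω ≤ t ^ 2 * d} = {ω | ∑ i, (Y i ω) ^ 2 ≤ t ^ 2 * d} := by
    rw [hSsum]
  rw [hset, hXindep.mgf_sum hXmeas Finset.univ] at chernoff
  have hfac : ∀ i, mgf (X i) μ v ≤ 4 * (p * t) := fun i =>
    aux_factor_bound μ (Y i) (hY i) p t t₀ hp ht₀0 ht (hsb i)
  have hexp : Real.exp (-v * (t ^ 2 * d)) = Real.exp 1 ^ d := by
    rw [hv, Real.exp_one_pow]
    congr 1
    field_simp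
  calc (μ {ω | ∑ i, (Y i ω) ^ 2 ≤ t ^ 2 * d}).toReal
      ≤ Real.exp (-v * (t ^ 2 * d)) * ∏ i, mgf (X i) μ v := chernoff
    _ ≤ Real.exp 1 ^ d * (4 * (p * t)) ^ d := by
        rw [hexp]
        refine mul_le_mul_of_nonneg_left ?_ (by positivity)
        calc ∏ i, mgf (X i) μ v ≤ ∏ _i : Fin d, 4 * (p * t) :=
              Finset.prod_le_prod (fun i _ => mgf_nonneg) fun i _ => hfac i
          _ = (4 * (p * t)) ^ d := by
              rw [Finset.prod_const, Finset.card_univ, Fintype.card_fin]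
    _ ≤ (11 * p * t) ^ d := by
        rw [← mul_pow]
        refine pow_le_pow_left₀ (by positivity) ?_ d
        have he2 : Real.exp 1 < 2.7182818286 := Real.exp_one_lt_d9
        nlinarith [mul_pos hp htpos]
end
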